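/- Let b = Π_{j=1}^N b_{a_j} be a finite Blaschke product and J₀(z) = z·b′(z)/(N·b(z)) for z ∈ 𝕋. There exist θ₀ ∈ ℝ with e^{iθ₀} = b(1) and a strictly increasing continuous function θ : [0, 2π] → [θ₀, θ₀ + 2πN] with θ(0) = θ₀ and θ(2π) = θ₀ + 2πN, such that b(e^{it}) = e^{iθ(t)} for all t ∈ [0, 2π], and θ is differentiable on (0, 2π) with θ′(t) = N·J₀(e^{it}) > 0 for all t ∈ (0, 2π). In particular θ is a homeomorphism of [0, 2π] onto [θ₀, θ₀ + 2πN]. -/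

import Mathlib

/-! On the unit circle the logarithmic derivative of a Blaschke factor is a Poisson kernel,
`z b_a'(z) / b_a(z) = (1 - |a|²) / |z - a|² > 0`. Hence `f(t) = b(e^{it})` solves `f' = i κ f`
with `κ(t) = Σⱼ P_{aⱼ}(e^{it}) = N J₀(e^{it}) > 0`, so `b(e^{it}) = b(1) e^{i ∫₀ᵗ κ}` and
`θ(t) = arg b(1) + ∫₀ᵗ κ` is a strictly increasing continuous lift of the argument. Each Poisson
kernel has mean one over the circle, which gives `θ(2π) - θ(0) = 2πN`. -/

open MeasureTheory Complex ComplexConjugate Topology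

set_option maxHeartbeats 1000000
set_option synthInstance.maxHeartbeats 1000000

noncomputable section

namespace CompEnd

instance : MeasurableSpace Circle := borel Circle
instance : BorelSpace Circle := ⟨rfl⟩

/-- normalized Haar (Lebesgue) measure `m` on the unit circle `𝕋` -/
def m : Measure Circle := Measure.haarMeasure ⊤

instance : IsFiniteMeasure m := by unfold m; infer_instance

/-- `L²(𝕋)` -/
abbrev L2 := Lp ℂ 2 m
/-- `L∞(𝕋)` -/
abbrev Linf := Lp ℂ ⊤ m

/-- the continuous function `z ↦ zⁿ` on the circle -/
def χ (n : ℤ) : C(Circle, ℂ) :=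
  ⟨fun z => ((z ^ n : Circle) : ℂ), continuous_subtype_val.comp (continuous_zpow n)⟩

/-- the exponential basis vector `eₙ(z) = zⁿ` of `L²(𝕋)` -/
def e (n : ℤ) : L2 := ContinuousMap.toLp 2 m ℂ (χ n)

open Classical in
/-- the element of `L²(𝕋)` determined by a square-integrable function (junk value `0`
otherwise) -/
def toL2 (φ : Circle → ℂ) : L2 := if h : MemLp φ 2 m then h.toLp φ else 0

open Classical in
/-- the element of `L∞(𝕋)` determined by an essentially bounded function (junk value `0`
otherwise) -/
def toLinf (φ : Circle → ℂ) : Linf := if h : MemLp φ ⊤ m then h.toLp φ else 0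

/-- the Hardy space `H²(𝕋)`: the closed linear span of `{eₙ : n ≥ 0}` in `L²(𝕋)` -/
def H2 : Submodule ℂ L2 := (Submodule.span ℂ (Set.range fun n : ℕ => e n)).topologicalClosure

lemma H2_isClosed : IsClosed (H2 : Set L2) := Submodule.isClosed_topologicalClosure _

instance : CompleteSpace H2 := H2_isClosed.completeSpace_coe

lemma e_mem_H2 (n : ℕ) : e n ∈ H2 :=
  Submodule.le_topologicalClosure _ (Submodule.subset_span ⟨n, rfl⟩)

/-- multiplication operator on `L²(𝕋)` by an essentially bounded function -/
def mulCLM (φ : Circle → ℂ) (hφ : MemLp φ ⊤ m) : L2 →L[ℂ] L2 :=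
  LinearMap.mkContinuous
    { toFun := fun f => ((Lp.memLp f).smul (r := 2) hφ).toLp (φ • ⇑f)
      map_add' := by
        intro f g
        rw [← MemLp.toLp_add]
        apply MemLp.toLp_congr
        filter_upwards [Lp.coeFn_add f g] with x hx
        simp only [Pi.add_apply] at hx
        simp only [Pi.smul_apply, smul_eq_mul, Pi.mul_apply, Pi.add_apply, hx]
        ring
      map_smul' := by
        intro c f
        simp only [RingHom.id_apply]
        rw [← MemLp.toLp_const_smul c ((Lp.memLp f).smul (r := 2) hφ)]
        apply MemLp.toLp_congr
        filter_upwards [Lp.coeFn_smul c f] with x hx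
        simp only [Pi.smul_apply, smul_eq_mul, Pi.mul_apply] at hx ⊢
        rw [hx]
        ring }
    (eLpNorm φ ⊤ m).toReal
    (by
      intro f
      simp only [LinearMap.coe_mk, AddHom.coe_mk]
      rw [Lp.norm_toLp, Lp.norm_def]
      rw [← ENNReal.toReal_mul]
      apply ENNReal.toReal_mono
      · exact ENNReal.mul_ne_top hφ.2.ne (Lp.eLpNorm_ne_top f)
      · exact eLpNorm_smul_le_eLpNorm_top_mul_eLpNorm 2 (Lp.aestronglyMeasurable f) φ)

open Classical in
/-- the multiplication operator `π(φ)` on `L²(𝕋)` (junk value `0` if `φ` is not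
essentially bounded) -/
def mul (φ : Circle → ℂ) : L2 →L[ℂ] L2 :=
  if h : MemLp φ ⊤ m then mulCLM φ h else 0

/-- the multiplication operator `π(φ)` for `φ ∈ L∞(𝕋)` -/
def mulL (φ : Linf) : L2 →L[ℂ] L2 := mulCLM ⇑φ (Lp.memLp φ)

/-- the Toeplitz operator `τ(φ)` on `H²(𝕋)`, i.e. the compression `P π(φ) P` of `π(φ)`
to the Hardy space -/
def toep (φ : Circle → ℂ) : H2 →L[ℂ] H2 :=
  H2.orthogonalProjectionOnto.comp ((mul φ).comp (Submodule.subtypeL H2))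

/-- the Toeplitz operator `τ(φ)` for `φ ∈ L∞(𝕋)` -/
def toepL (φ : Linf) : H2 →L[ℂ] H2 :=
  H2.orthogonalProjectionOnto.comp ((mulL φ).comp (Submodule.subtypeL H2))

/-- the `n`-th Fourier coefficient `f̂(n) = ∫ f(z) z̄ⁿ dm(z)` -/
def coeff (f : Circle → ℂ) (n : ℤ) : ℂ := ∫ z, f z * conj (χ n z) ∂m

/-- a boundary inner function: `b ∈ L∞(𝕋)` with `|b| = 1` a.e. and `b̂(n) = 0` for `n < 0` -/
def IsBdryInner (b : Circle → ℂ) : Prop :=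
  Measurable b ∧ (∀ᵐ z ∂m, ‖b z‖ = 1) ∧ ∀ n : ℤ, n < 0 → coeff b n = 0

/-- pointwise integer powers of a unimodular function, with `b⁻ᵏ = conj(b)ᵏ` for `k > 0` -/
def zpowFun (b : Circle → ℂ) (n : ℤ) : Circle → ℂ := fun z =>
  if 0 ≤ n then b z ^ n.toNat else conj (b z) ^ (-n).toNat

/-- the space `𝒟 = H²(𝕋) ⊖ π(b)H²(𝕋)` -/
def D (b : Circle → ℂ) : Submodule ℂ L2 := H2 ⊓ (Submodule.map (mul b : L2 →ₗ[ℂ] L2) H2)ᗮ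

open Classical in
/-- a Cuntz family of isometries on a Hilbert space:  `Sᵢ* Sⱼ = δᵢⱼ I` and
`Σᵢ Sᵢ Sᵢ* = I` in the strong operator topology -/
def IsCuntzFamily {H : Type*} [NormedAddCommGroup H] [InnerProductSpace ℂ H]
    [CompleteSpace H] {I : Type*} (S : I → H →L[ℂ] H) : Prop :=
  (∀ i j : I, (ContinuousLinearMap.adjoint (S i)).comp (S j) =
      if i = j then ContinuousLinearMap.id ℂ H else 0) ∧
  ∀ f : H, HasSum (fun i => S i (ContinuousLinearMap.adjoint (S i) f)) f

/-- the weak-* topology `σ(L∞(𝕋), L¹(𝕋))` on `L∞(𝕋)` -/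
def wstar : TopologicalSpace Linf :=
  TopologicalSpace.induced (fun φ : Linf => fun g : Lp ℂ 1 m => ∫ z, φ z * g z ∂m)
    Pi.topologicalSpace

/-- pointwise product in `L∞(𝕋)` -/
def sMul (x y : Linf) : Linf := toLinf fun z => x z * y z
/-- the involution (pointwise complex conjugation) on `L∞(𝕋)` -/
def sStar (x : Linf) : Linf := toLinf fun z => conj (x z)
/-- the unit of `L∞(𝕋)` -/
def sOne : Linf := toLinf fun _ => 1

/-- a unital *-endomorphism of `L∞(𝕋)` -/
def IsStarEndo (β : Linf → Linf) : Prop :=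
  (∀ x y, β (x + y) = β x + β y) ∧ (∀ (c : ℂ) (x), β (c • x) = c • β x) ∧
  (∀ x y, β (sMul x y) = sMul (β x) (β y)) ∧ (∀ x, β (sStar x) = sStar (β x)) ∧
  β sOne = sOne

/-- the basis functions `eₙ` as elements of `L∞(𝕋)` -/
def eInf (n : ℤ) : Linf := toLinf (χ n)

/-- `β` is the endomorphism of `L∞(𝕋)` of composition with `b`: the (unique) weak-*
continuous unital *-endomorphism satisfying `β(eₙ) = bⁿ` for all `n ∈ ℤ` -/
def IsBeta (b : Circle → ℂ) (β : Linf → Linf) : Prop :=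
  IsStarEndo β ∧ Continuous[wstar, wstar] β ∧ ∀ n : ℤ, β (eInf n) = toLinf (zpowFun b n)

/-- the Blaschke factor `b_a` with zero `a` -/
def blaschkeFactor (a : ℂ) : ℂ → ℂ := fun z =>
  if a = 0 then z else (((‖a‖ : ℝ) : ℂ) / a) * ((a - z) / (1 - conj a * z))

/-- the finite Blaschke product with zeros `a 0, …, a (N-1)` (with multiplicity) -/
def finBlaschke {N : ℕ} (a : Fin N → ℂ) : ℂ → ℂ := fun z => ∏ j, blaschkeFactor (a j) z

/-- restriction of a function on `ℂ` to the unit circle -/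
def res (f : ℂ → ℂ) : Circle → ℂ := fun z => f (z : ℂ)

/-- the function `J₀(z) = z b′(z) / (N b(z))` -/
def J0 {N : ℕ} (a : Fin N → ℂ) : ℂ → ℂ := fun z =>
  z * deriv (finBlaschke a) z / (N * finBlaschke a z)

open Classical in
/-- a complex number of modulus one, regarded as an element of the circle (junk value `1`
otherwise) -/
def toCircle (w : ℂ) : Circle :=
  if h : ‖w‖ = 1 then (⟨w, by simpa [Submonoid.unitSphere] using h⟩ : Circle) else 1

/-- a finite Blaschke product as a self-map of the circle -/
def bCircle {N : ℕ} (a : Fin N → ℂ) : Circle → Circle := fun z => toCircle (finBlaschke a z)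

/-- `Γ` is the operator of composition with the finite Blaschke product determined by `a`:
the (unique) bounded operator on `L²(𝕋)` with `Γ(eₙ) = bⁿ` for all `n ∈ ℤ` -/
def IsGamma {N : ℕ} (a : Fin N → ℂ) (Γ : L2 →L[ℂ] L2) : Prop :=
  ∀ n : ℤ, Γ (e n) = toL2 (zpowFun (res (finBlaschke a)) n)

/-- `ψ` is (a representative of) the canonical transfer operator `𝓛` applied to `φ`:
`∫ ψ χ dm = ∫ J₀ φ (χ∘b) dm` for every continuous `χ` -/
def IsTransfer {N : ℕ} (a : Fin N → ℂ) (φ ψ : Circle → ℂ) : Prop :=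
  ∀ g : C(Circle, ℂ), ∫ z, ψ z * g z ∂m = ∫ z, J0 a (z : ℂ) * φ z * g (bCircle a z) ∂m

open Classical in
/-- restriction of an operator on `L²(𝕋)` to `H²(𝕋)` (junk value `0` if `H²(𝕋)` is not
invariant) -/
def rest (S : L2 →L[ℂ] L2) : H2 →L[ℂ] H2 :=
  if h : ∀ f : L2, f ∈ H2 → S f ∈ H2 then
    ⟨{ toFun := fun f => ⟨S f.1, h f.1 f.2⟩
       map_add' := fun f g => Subtype.ext (by simp)
       map_smul' := fun c f => Subtype.ext (by simp) },
     (S.continuous.comp continuous_subtype_val).subtype_mk _⟩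
  else 0

end CompEnd

theorem StrictMonoOn.bijOn_Icc {f : ℝ → ℝ} {a b : ℝ} (hab : a ≤ b)
    (hcont : ContinuousOn f (Set.Icc a b)) (hmono : StrictMonoOn f (Set.Icc a b)) :
    Set.BijOn f (Set.Icc a b) (Set.Icc (f a) (f b)) :=
  ⟨fun _ hx => ⟨hmono.monotoneOn ⟨le_rfl, hab⟩ hx hx.1, hmono.monotoneOn hx ⟨hab, le_rfl⟩ hx.2⟩,
    hmono.injOn, intermediate_value_Icc hab hcont⟩

theorem eq_mul_exp_integral_mul_I_of_hasDerivAt {f : ℝ → ℂ} {κ : ℝ → ℝ} (hκ : Continuous κ)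
    (hf : ∀ t, HasDerivAt f (κ t * I * f t) t) (t : ℝ) :
    f t = f 0 * exp ((∫ s in (0 : ℝ)..t, κ s) * I) := by
  set Φ : ℝ → ℝ := fun t => ∫ s in (0 : ℝ)..t, κ s
  have hΦ (t : ℝ) : HasDerivAt Φ (κ t) t := (hκ.integral_hasStrictDerivAt 0 t).hasDerivAt
  have hconst (t : ℝ) : HasDerivAt (fun t => f t * exp (-(Φ t : ℂ) * I)) 0 t := by
    have hE : HasDerivAt (fun t => exp (-(Φ t : ℂ) * I)) (exp (-(Φ t : ℂ) * I) * (-κ t * I)) t :=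
      ((hΦ t).ofReal_comp.fun_neg.mul_const I).cexp
    exact ((hf t).fun_mul hE).congr_deriv (by ring)
  have h := is_const_of_deriv_eq_zero (fun t => (hconst t).differentiableAt)
    (fun t => (hconst t).deriv) t 0
  simp only [Φ, intervalIntegral.integral_same, ofReal_zero, neg_zero, zero_mul, exp_zero,
    mul_one] at h
  rw [← h, mul_assoc, ← exp_add]
  simp

section PoissonKernel

variable {a z : ℂ}

lemma one_sub_conj_mul_eq_mul_conj_sub (hz : ‖z‖ = 1) : 1 - conj a * z = z * conj (z - a) := by
  have hzz : z * conj z = 1 := by rw [mul_conj', hz]; norm_num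
  rw [map_sub]
  linear_combination -hzz

lemma sub_ne_zero_of_norm_lt_one (ha : ‖a‖ < 1) (hz : ‖z‖ = 1) : z - a ≠ 0 := by
  intro h
  rw [sub_eq_zero.1 h] at hz
  exact ha.ne hz

lemma one_sub_conj_mul_ne_zero (ha : ‖a‖ < 1) (hz : ‖z‖ = 1) : 1 - conj a * z ≠ 0 := by
  rw [one_sub_conj_mul_eq_mul_conj_sub hz]
  exact mul_ne_zero (norm_ne_zero_iff.1 (by rw [hz]; exact one_ne_zero))
    ((map_ne_zero _).2 (sub_ne_zero_of_norm_lt_one ha hz))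

lemma poissonKernel_zero_pos (ha : ‖a‖ < 1) (hz : ‖z‖ = 1) : 0 < poissonKernel 0 a z := by
  rw [poissonKernel_def, sub_zero, sub_zero, hz]
  have : 0 < ‖z - a‖ := norm_pos_iff.2 (sub_ne_zero_of_norm_lt_one ha hz)
  have : ‖a‖ ^ 2 < 1 := by nlinarith [norm_nonneg a]
  apply div_pos <;> nlinarith

lemma continuous_poissonKernel_zero_exp (ha : ‖a‖ < 1) :
    Continuous fun t : ℝ => poissonKernel 0 a (exp (t * I)) := by
  simp only [poissonKernel_def]
  refine Continuous.div (by fun_prop) (by fun_prop) fun t => ?_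
  simpa using sub_ne_zero_of_norm_lt_one ha (norm_exp_ofReal_mul_I t)

lemma integral_poissonKernel_zero_exp (ha : ‖a‖ < 1) :
    ∫ t in (0 : ℝ)..2 * Real.pi, poissonKernel 0 a (exp (t * I)) = 2 * Real.pi := by
  have h := InnerProductSpace.HarmonicOnNhd.circleAverage_poissonKernel_smul
    (InnerProductSpace.harmonicOnNhd_const (1 : ℝ)) (c := 0) (R := 1) (mem_ball_zero_iff.2 ha)
  simp only [Real.circleAverage_def, circleMap_zero, ofReal_one, one_mul, smul_eq_mul,
    Pi.mul_apply, mul_one] at h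
  field_simp at h
  exact h

end PoissonKernel

namespace CompEnd

section BlaschkeFactor

variable {a z : ℂ}

lemma blaschkeFactor_zero : blaschkeFactor 0 = id := by
  funext z; simp [blaschkeFactor]

lemma blaschkeFactor_eq_of_ne_zero (h : a ≠ 0) :
    blaschkeFactor a = fun z => ((‖a‖ : ℂ) / a) * ((a - z) / (1 - conj a * z)) := by
  funext z; simp [blaschkeFactor, h]

lemma norm_blaschkeFactor (ha : ‖a‖ < 1) (hz : ‖z‖ = 1) : ‖blaschkeFactor a z‖ = 1 := by
  rcases eq_or_ne a 0 with rfl | h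
  · simpa [blaschkeFactor_zero] using hz
  have hden : ‖1 - conj a * z‖ = ‖z - a‖ := by
    rw [one_sub_conj_mul_eq_mul_conj_sub hz, norm_mul, hz, one_mul, norm_conj]
  rw [blaschkeFactor_eq_of_ne_zero h, norm_mul, norm_div, norm_div, hden, norm_real, norm_norm,
    norm_sub_rev, div_self (norm_ne_zero_iff.2 h),
    div_self (norm_ne_zero_iff.2 (sub_ne_zero_of_norm_lt_one ha hz)), one_mul]

lemma differentiableAt_blaschkeFactor (h : 1 - conj a * z ≠ 0) :
    DifferentiableAt ℂ (blaschkeFactor a) z := by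
  rcases eq_or_ne a 0 with rfl | ha
  · rw [blaschkeFactor_zero]; exact differentiableAt_id
  rw [blaschkeFactor_eq_of_ne_zero ha]
  fun_prop (disch := exact h)

lemma logDeriv_blaschkeFactor (h : 1 - conj a * z ≠ 0) (hz : z - a ≠ 0) :
    logDeriv (blaschkeFactor a) z = (z - a)⁻¹ + conj a / (1 - conj a * z) := by
  rcases eq_or_ne a 0 with rfl | ha
  · simp [blaschkeFactor_zero, logDeriv_id]
  have hza : a - z ≠ 0 := by rwa [← neg_sub, neg_ne_zero]
  rw [blaschkeFactor_eq_of_ne_zero ha, logDeriv_const_mul _ _ (by simpa using ha),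
    logDeriv_div _ hza h (by fun_prop) (by fun_prop), logDeriv_apply, logDeriv_apply]
  have d1 : deriv (fun w => a - w) z = -1 := by simp
  have d2 : deriv (fun w => 1 - conj a * w) z = -conj a := by simp
  rw [d1, d2]
  field_simp
  ring

lemma mul_logDeriv_blaschkeFactor (ha : ‖a‖ < 1) (hz : ‖z‖ = 1) :
    z * logDeriv (blaschkeFactor a) z = poissonKernel 0 a z := by
  have hza := sub_ne_zero_of_norm_lt_one ha hz
  have hz0 : z ≠ 0 := by rintro rfl; simp at hz
  have hzac : conj z - conj a ≠ 0 := by rw [← map_sub]; exact (map_ne_zero _).2 hza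
  have hzz : z * conj z = 1 := by rw [mul_conj', hz]; norm_num
  rw [logDeriv_blaschkeFactor (one_sub_conj_mul_ne_zero ha hz) hza, poissonKernel_def,
    one_sub_conj_mul_eq_mul_conj_sub hz]
  simp only [sub_zero, hz]
  push_cast
  rw [← mul_conj', ← mul_conj', map_sub]
  field_simp
  linear_combination hzz

end BlaschkeFactor

section FinBlaschke

variable {N : ℕ} (a : Fin N → ℂ) {z : ℂ}

lemma norm_finBlaschke (ha : ∀ j, ‖a j‖ < 1) (hz : ‖z‖ = 1) : ‖finBlaschke a z‖ = 1 := by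
  simp only [finBlaschke, norm_prod, norm_blaschkeFactor (ha _) hz, Finset.prod_const_one]

lemma differentiableAt_finBlaschke (ha : ∀ j, ‖a j‖ < 1) (hz : ‖z‖ = 1) :
    DifferentiableAt ℂ (finBlaschke a) z :=
  DifferentiableAt.fun_finsetProd fun j _ =>
    differentiableAt_blaschkeFactor (one_sub_conj_mul_ne_zero (ha j) hz)

lemma mul_logDeriv_finBlaschke (ha : ∀ j, ‖a j‖ < 1) (hz : ‖z‖ = 1) :
    z * logDeriv (finBlaschke a) z = ((∑ j, poissonKernel 0 (a j) z : ℝ) : ℂ) := by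
  have hne : ∀ j ∈ Finset.univ, blaschkeFactor (a j) z ≠ 0 := fun j _ h => by
    simpa [h] using norm_blaschkeFactor (ha j) hz
  unfold finBlaschke
  rw [logDeriv_prod hne fun j _ =>
      differentiableAt_blaschkeFactor (one_sub_conj_mul_ne_zero (ha j) hz),
    Finset.mul_sum]
  push_cast
  exact Finset.sum_congr rfl fun j _ => mul_logDeriv_blaschkeFactor (ha j) hz

lemma J0_eq_mul_logDeriv (z : ℂ) : J0 a z = z * logDeriv (finBlaschke a) z / N := by
  rw [J0, logDeriv_apply]
  ring

def blaschkeArgDeriv (t : ℝ) : ℝ := ∑ j, poissonKernel 0 (a j) (exp (t * I))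

variable {a}

lemma continuous_blaschkeArgDeriv (ha : ∀ j, ‖a j‖ < 1) : Continuous (blaschkeArgDeriv a) :=
  continuous_finsetSum _ fun j _ => continuous_poissonKernel_zero_exp (ha j)

lemma blaschkeArgDeriv_pos (hN : 0 < N) (ha : ∀ j, ‖a j‖ < 1) (t : ℝ) :
    0 < blaschkeArgDeriv a t :=
  Finset.sum_pos (fun j _ => poissonKernel_zero_pos (ha j) (norm_exp_ofReal_mul_I t))
    (Finset.univ_nonempty_iff.2 ⟨⟨0, hN⟩⟩)

lemma integral_blaschkeArgDeriv (ha : ∀ j, ‖a j‖ < 1) :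
    ∫ t in (0 : ℝ)..2 * Real.pi, blaschkeArgDeriv a t = N * (2 * Real.pi) := by
  unfold blaschkeArgDeriv
  rw [intervalIntegral.integral_finsetSum fun j _ =>
      (continuous_poissonKernel_zero_exp (ha j)).intervalIntegrable _ _]
  simp [integral_poissonKernel_zero_exp (ha _)]

lemma natCast_mul_re_J0_exp (ha : ∀ j, ‖a j‖ < 1) (t : ℝ) :
    N * (J0 a (exp (t * I))).re = blaschkeArgDeriv a t := by
  rcases N.eq_zero_or_pos with rfl | hN
  · simp [blaschkeArgDeriv]
  rw [J0_eq_mul_logDeriv, mul_logDeriv_finBlaschke a ha (norm_exp_ofReal_mul_I t),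
    ← ofReal_natCast, ← ofReal_div, ofReal_re, blaschkeArgDeriv]
  field_simp

lemma hasDerivAt_finBlaschke_exp (ha : ∀ j, ‖a j‖ < 1) (t : ℝ) :
    HasDerivAt (fun t : ℝ => finBlaschke a (exp (t * I)))
      (blaschkeArgDeriv a t * I * finBlaschke a (exp (t * I))) t := by
  have hz := norm_exp_ofReal_mul_I t
  have hexp : HasDerivAt (fun t : ℝ => exp (t * I)) (exp (t * I) * I) t := by
    simpa using ((hasDerivAt_id t).ofReal_comp.mul_const I).cexp
  refine ((differentiableAt_finBlaschke a ha hz).hasDerivAt.comp t hexp).congr_deriv ?_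
  have hb : finBlaschke a (exp (t * I)) ≠ 0 :=
    norm_ne_zero_iff.1 ((norm_finBlaschke a ha hz).symm ▸ one_ne_zero)
  rw [blaschkeArgDeriv, ← mul_logDeriv_finBlaschke a ha hz, logDeriv_apply]
  field_simp

end FinBlaschke

/-- For a finite Blaschke product `b` there is a strictly increasing
continuous `θ : [0, 2π] → [θ₀, θ₀ + 2πN]` with `b(e^{it}) = e^{iθ(t)}`,
`θ′(t) = N J₀(e^{it}) > 0` on `(0, 2π)`, and `θ` is a homeomorphism (bijection) of
`[0, 2π]` onto `[θ₀, θ₀ + 2πN]`. -/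
theorem statement11 {N : ℕ} (hN : 0 < N) (a : Fin N → ℂ)
    (ha : ∀ j, ‖a j‖ < 1) :
    ∃ (θ₀ : ℝ) (θ : ℝ → ℝ),
      Complex.exp (θ₀ * Complex.I) = finBlaschke a 1 ∧
      θ 0 = θ₀ ∧ θ (2 * Real.pi) = θ₀ + N * (2 * Real.pi) ∧
      ContinuousOn θ (Set.Icc 0 (2 * Real.pi)) ∧
      StrictMonoOn θ (Set.Icc 0 (2 * Real.pi)) ∧
      (∀ t ∈ Set.Icc 0 (2 * Real.pi),
        finBlaschke a (Complex.exp (t * Complex.I)) = Complex.exp (θ t * Complex.I)) ∧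
      (∀ t ∈ Set.Ioo 0 (2 * Real.pi),
        HasDerivAt θ ((N : ℝ) * (J0 a (Complex.exp (t * Complex.I))).re) t ∧
        0 < (N : ℝ) * (J0 a (Complex.exp (t * Complex.I))).re) ∧
      Set.BijOn θ (Set.Icc 0 (2 * Real.pi))
        (Set.Icc θ₀ (θ₀ + N * (2 * Real.pi))) := by
  set θ₀ := arg (finBlaschke a 1)
  set θ : ℝ → ℝ := fun t => θ₀ + ∫ s in (0 : ℝ)..t, blaschkeArgDeriv a s
  have hθ' (t : ℝ) : HasDerivAt θ (blaschkeArgDeriv a t) t :=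
    ((continuous_blaschkeArgDeriv ha).integral_hasStrictDerivAt 0 t).hasDerivAt.const_add θ₀
  have hθ₀ : exp (θ₀ * I) = finBlaschke a 1 := by
    simpa [norm_finBlaschke a ha (z := 1) (by simp)] using norm_mul_exp_arg_mul_I (finBlaschke a 1)
  have hθ0 : θ 0 = θ₀ := by simp [θ]
  have hθ2π : θ (2 * Real.pi) = θ₀ + N * (2 * Real.pi) := by
    simp only [θ, integral_blaschkeArgDeriv ha]
  have hphase (t : ℝ) : finBlaschke a (exp (t * I)) = exp (θ t * I) := by
    rw [eq_mul_exp_integral_mul_I_of_hasDerivAt (continuous_blaschkeArgDeriv ha)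
      (hasDerivAt_finBlaschke_exp ha) t]
    simp only [ofReal_zero, zero_mul, exp_zero, ← hθ₀, ← exp_add, θ, ofReal_add]
    ring_nf
  have hmono : StrictMono θ := strictMono_of_hasDerivAt_pos hθ' (blaschkeArgDeriv_pos hN ha)
  have hcont : Continuous θ := continuous_iff_continuousAt.2 fun t => (hθ' t).continuousAt
  refine ⟨θ₀, θ, hθ₀, hθ0, hθ2π, hcont.continuousOn, hmono.strictMonoOn _,
    fun t _ => hphase t, fun t _ => ?_, ?_⟩
  · rw [natCast_mul_re_J0_exp ha]
    exact ⟨hθ' t, blaschkeArgDeriv_pos hN ha t⟩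
  · rw [← hθ2π, ← hθ0]
    exact StrictMonoOn.bijOn_Icc Real.two_pi_pos.le hcont.continuousOn (hmono.strictMonoOn _)

end CompEnd
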